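/- Let D ≥ 1, x, μ ∈ ℝ^D, and let Σ be a symmetric positive-definite D×D real matrix. Write d² = (x − μ)ᵀ Σ⁻¹ (x − μ) and, for ν > 0, ω(ν) = (ν + D)/(ν + d²). Let ψ = (ln Γ)' denote the digamma function. Then the map ν ↦ ln p(x; ν, μ, Σ), where p is the multivariate Student-t density, is differentiable on (0, ∞) and its derivative at ν equals (1/2)·[ψ((D + ν)/2) − ψ(ν/2) + 1 − ln((ν + D)/ν) + ln ω(ν) − ω(ν)]. -/

import Mathlib

/-!
Up to constants, `log p` is `log Γ((D+ν)/2) - log Γ(ν/2) - (D/2) log ν - ((D+ν)/2) log ((ν+d²)/ν)`.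
Differentiating term by term, the last term contributes
`-(1/2) log ((ν+d²)/ν) - (1/2) ω(ν) + (D+ν)/(2ν)`, and `(D+ν)/(2ν) - D/(2ν) = 1/2`;
finally `log ((ν+d²)/ν) = log ((ν+D)/ν) - log ω(ν)`.
-/

open scoped BigOperators Matrix

/-- The multivariate Student-t density on `ℝ^D` with degrees of freedom `ν`,
location `μ` and scale matrix `S` (Definition 1 of the paper). -/
noncomputable def studentTDensity (D : ℕ) (ν : ℝ) (μ : Fin D → ℝ)
    (S : Matrix (Fin D) (Fin D) ℝ) (x : Fin D → ℝ) : ℝ :=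
  Real.Gamma (((D : ℝ) + ν) / 2) /
      (Real.Gamma (ν / 2) * (ν * Real.pi) ^ ((D : ℝ) / 2) * S.det ^ ((1 : ℝ) / 2)) *
    (1 + (x - μ) ⬝ᵥ (S⁻¹ *ᵥ (x - μ)) / ν) ^ (-(((D : ℝ) + ν) / 2))

/-- The digamma function `ψ = (log ∘ Γ)'`. -/
noncomputable def digamma : ℝ → ℝ := deriv fun t => Real.log (Real.Gamma t)

open Real

lemma Matrix.PosDef.dotProduct_inv_mulVec_nonneg {n : Type*} [Fintype n] [DecidableEq n]
    {S : Matrix n n ℝ} (hS : S.PosDef) (v : n → ℝ) : 0 ≤ v ⬝ᵥ (S⁻¹ *ᵥ v) := by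
  simpa using hS.inv.posSemidef.dotProduct_mulVec_nonneg v

lemma hasDerivAt_log_Gamma {u : ℝ} (hu : 0 < u) :
    HasDerivAt (fun t => log (Gamma t)) (digamma u) u := by
  have hΓ : DifferentiableAt ℝ Gamma u :=
    differentiableAt_Gamma fun m => by linarith [(m.cast_nonneg : (0 : ℝ) ≤ m)]
  exact (hΓ.log (Gamma_pos_of_pos hu).ne').hasDerivAt

/-- `log p(x; ν, μ, Σ)` as a function of `ν`, for `q = d_Σ(x, μ)²` and `c = log det Σ`. -/
noncomputable def studentTLogDensity (D : ℕ) (q c ν : ℝ) : ℝ :=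
  log (Gamma (((D : ℝ) + ν) / 2)) - log (Gamma (ν / 2)) - (D : ℝ) / 2 * log (ν * π) - c / 2 -
    ((D : ℝ) + ν) / 2 * (log (ν + q) - log ν)

lemma log_studentTDensity {D : ℕ} {ν : ℝ} (hν : 0 < ν) (μ x : Fin D → ℝ)
    {S : Matrix (Fin D) (Fin D) ℝ} (hS : S.PosDef) :
    log (studentTDensity D ν μ S x) =
      studentTLogDensity D ((x - μ) ⬝ᵥ (S⁻¹ *ᵥ (x - μ))) (log S.det) ν := by
  set q := (x - μ) ⬝ᵥ (S⁻¹ *ᵥ (x - μ))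
  have hq : 0 ≤ q := hS.dotProduct_inv_mulVec_nonneg (x - μ)
  have hdet : 0 < S.det := hS.det_pos
  have hΓ₁ : 0 < Gamma (((D : ℝ) + ν) / 2) := Gamma_pos_of_pos (by positivity)
  have hΓ₂ : 0 < Gamma (ν / 2) := Gamma_pos_of_pos (by positivity)
  have hbase : 1 + q / ν = (ν + q) / ν := by field_simp
  rw [studentTDensity, studentTLogDensity, hbase,
    log_mul (by positivity) (by positivity), log_div hΓ₁.ne' (by positivity),
    log_mul (by positivity) (by positivity), log_mul hΓ₂.ne' (by positivity),
    log_rpow (by positivity), log_rpow hdet, log_rpow (by positivity),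
    log_div (by positivity) hν.ne']
  ring

lemma hasDerivAt_studentTLogDensity (D : ℕ) {q ν : ℝ} (c : ℝ) (hν : 0 < ν) (hq : ν + q ≠ 0) :
    HasDerivAt (studentTLogDensity D q c)
      (1 / 2 * (digamma (((D : ℝ) + ν) / 2) - digamma (ν / 2) + 1 -
        log ((ν + D) / ν) + log ((ν + D) / (ν + q)) - (ν + D) / (ν + q))) ν := by
  have hhalf : HasDerivAt (fun t : ℝ => t / 2) (1 / 2) ν := by
    simpa using (hasDerivAt_id ν).div_const 2
  have hshift : HasDerivAt (fun t : ℝ => ((D : ℝ) + t) / 2) (1 / 2) ν := by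
    simpa using ((hasDerivAt_id ν).const_add (D : ℝ)).div_const 2
  have hΓ₁ := (hasDerivAt_log_Gamma (by positivity : 0 < ((D : ℝ) + ν) / 2)).comp ν hshift
  have hΓ₂ := (hasDerivAt_log_Gamma (by positivity : 0 < ν / 2)).comp ν hhalf
  have hπ := ((hasDerivAt_mul_const π).log (by positivity)).const_mul ((D : ℝ) / 2)
  have hlog := (((hasDerivAt_id ν).add_const q).log hq).sub (hasDerivAt_log hν.ne')
  have h := (((hΓ₁.sub hΓ₂).sub hπ).sub_const (c / 2)).sub (hshift.mul hlog)
  refine h.congr_deriv ?_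
  have hD : ν + D ≠ 0 := by positivity
  simp only [id, Pi.sub_apply]
  rw [log_div hD hν.ne', log_div hD hq]
  field_simp
  ring

theorem studentT_log_deriv_dof_general
    (D : ℕ) (x μ : Fin D → ℝ)
    (S : Matrix (Fin D) (Fin D) ℝ) (hS : S.PosDef)
    (d2 : ℝ) (hd2 : d2 = (x - μ) ⬝ᵥ (S⁻¹ *ᵥ (x - μ)))
    (ω : ℝ → ℝ) (hω : ω = fun ν => (ν + (D : ℝ)) / (ν + d2)) :
    ∀ ν : ℝ, 0 < ν →
      HasDerivAt (fun ν' : ℝ => Real.log (studentTDensity D ν' μ S x))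
        ((1 / 2) * (digamma (((D : ℝ) + ν) / 2) - digamma (ν / 2) + 1 -
            Real.log ((ν + (D : ℝ)) / ν) + Real.log (ω ν) - ω ν)) ν := by
  subst hd2 hω
  intro ν hν
  have hq := hS.dotProduct_inv_mulVec_nonneg (x - μ)
  refine (hasDerivAt_studentTLogDensity D (log S.det) hν (by positivity)).congr_of_eventuallyEq ?_
  filter_upwards [Ioi_mem_nhds hν] with t ht
  exact log_studentTDensity ht μ x hS

/-- the map `ν ↦ log p(x; ν, μ, Σ)` is differentiable on `(0, ∞)` and its
derivative at `ν` is
`(1/2) * (ψ((D+ν)/2) - ψ(ν/2) + 1 - log ((ν+D)/ν) + log (ω ν) - ω ν)`,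
where `d² = (x-μ)ᵀ Σ⁻¹ (x-μ)` and `ω ν = (ν+D)/(ν+d²)`. -/
theorem studentT_log_deriv_dof
    (D : ℕ) (hD : 1 ≤ D) (x μ : Fin D → ℝ)
    (S : Matrix (Fin D) (Fin D) ℝ) (hSsymm : S.IsSymm) (hS : S.PosDef)
    (d2 : ℝ) (hd2 : d2 = (x - μ) ⬝ᵥ (S⁻¹ *ᵥ (x - μ)))
    (ω : ℝ → ℝ) (hω : ω = fun ν => (ν + (D : ℝ)) / (ν + d2)) :
    ∀ ν : ℝ, 0 < ν →
      HasDerivAt (fun ν' : ℝ => Real.log (studentTDensity D ν' μ S x))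
        ((1 / 2) * (digamma (((D : ℝ) + ν) / 2) - digamma (ν / 2) + 1 -
            Real.log ((ν + (D : ℝ)) / ν) + Real.log (ω ν) - ω ν)) ν :=
  studentT_log_deriv_dof_general D x μ S hS d2 hd2 ω hω
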